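/- arXiv:2506.03370 — 2 statements merged into one kernel-verified Lean document; each statement's English description precedes it below -/
import Mathlib

section
/- Let s : V × V → {0,1} ⊆ ℝ be any function on a set V, and define s̄((v,i,n),(w,j,n)) = (i - j - 1/2)·e^{3j}·(s(v,w) + 1/(4n·e^{3n})) for real i, j and integer n ≥ 1. Then for all 0 ≤ j < i ≤ n-1: (a) s̄((v,i,n),(w,j,n)) > 0; (b) if s(v,w) = 0 then s̄((v,i,n),(w,j,n)) < 1/3; (c) if s(v,w) = 1 then s̄((v,i,n),(w,j,n)) > 1/2. -/
/-! The weight `(i - j - 1/2) e^{3j}` is at least `1/2` once `j < i`, and at most `n e^{3n}`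
for `i ≤ n`, so the perturbation `1/(4 n e^{3n})` moves it by at most `1/4`: it stays below
`1/3` when `s(v,w) = 0` and only grows when `s(v,w) = 1`. -/

open Real

section AttentionWeight

variable {c i j : ℝ}

lemma half_le_mul_exp (hc : 0 ≤ c) (hj : 0 ≤ j) (hij : j + 1 ≤ i) :
    1 / 2 ≤ (i - j - 1 / 2) * exp (c * j) :=
  calc (1 : ℝ) / 2 = 1 / 2 * 1 := (mul_one _).symm
    _ ≤ (i - j - 1 / 2) * exp (c * j) :=
      mul_le_mul (by linarith) (one_le_exp (by positivity)) zero_le_one (by linarith)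

lemma mul_exp_le_mul_exp {n : ℝ} (hc : 0 ≤ c) (hj : 0 ≤ j) (hij : j + 1 ≤ i) (hin : i ≤ n) :
    (i - j - 1 / 2) * exp (c * j) ≤ n * exp (c * n) :=
  mul_le_mul (by linarith) (exp_le_exp.mpr (by nlinarith)) (exp_pos _).le (by linarith)

lemma mul_exp_mul_inv_lt_third {n : ℝ} (hc : 0 ≤ c) (hj : 0 ≤ j) (hij : j + 1 ≤ i)
    (hin : i ≤ n) : (i - j - 1 / 2) * exp (c * j) * (1 / (4 * n * exp (c * n))) < 1 / 3 := by
  have hn : 0 < n := by linarith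
  calc (i - j - 1 / 2) * exp (c * j) * (1 / (4 * n * exp (c * n)))
      ≤ n * exp (c * n) * (1 / (4 * n * exp (c * n))) :=
        mul_le_mul_of_nonneg_right (mul_exp_le_mul_exp hc hj hij hin) (by positivity)
    _ = 1 / 4 := by field_simp
    _ < 1 / 3 := by norm_num

end AttentionWeight

theorem modified_attention_values_general {V : Type*} (s : V → V → ℝ)
    (hs : ∀ v w, s v w = 0 ∨ s v w = 1)
    (n : ℕ) (i j : ℕ) (hj : j < i) (hi : i ≤ n - 1)
    (v w : V) :
    (0 < ((i : ℝ) - (j : ℝ) - 1 / 2) * Real.exp (3 * j) *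
        (s v w + 1 / (4 * n * Real.exp (3 * n)))) ∧
    (s v w = 0 →
      ((i : ℝ) - (j : ℝ) - 1 / 2) * Real.exp (3 * j) *
        (s v w + 1 / (4 * n * Real.exp (3 * n))) < 1 / 3) ∧
    (s v w = 1 →
      1 / 2 < ((i : ℝ) - (j : ℝ) - 1 / 2) * Real.exp (3 * j) *
        (s v w + 1 / (4 * n * Real.exp (3 * n)))) := by
  have hij : (j : ℝ) + 1 ≤ i := by exact_mod_cast hj
  have hin : (i : ℝ) ≤ n := by exact_mod_cast (by omega : i ≤ n)
  have hc : (0 : ℝ) ≤ 3 := by norm_num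
  have hweight := half_le_mul_exp hc (Nat.cast_nonneg j) hij
  have hε : 0 < 1 / (4 * (n : ℝ) * exp (3 * n)) := by
    have : (0 : ℝ) < n := by linarith [(Nat.cast_nonneg j : (0 : ℝ) ≤ j)]
    positivity
  have hs_nonneg : 0 ≤ s v w := by rcases hs v w with h | h <;> simp [h]
  refine ⟨by positivity, fun h0 => ?_, fun h1 => ?_⟩
  · rw [h0, zero_add]
    exact mul_exp_mul_inv_lt_third hc (Nat.cast_nonneg j) hij hin
  · rw [h1]
    nlinarith

/-- Properties of the modified attention function
`s̄((v,i,n),(w,j,n)) = (i - j - 1/2)·e^{3j}·(s(v,w) + 1/(4n·e^{3n}))`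
for `0 ≤ j < i ≤ n-1`: it is positive, below `1/3` when `s(v,w) = 0`, and
above `1/2` when `s(v,w) = 1`. -/
theorem modified_attention_values {V : Type*} (s : V → V → ℝ)
    (hs : ∀ v w, s v w = 0 ∨ s v w = 1)
    (n : ℕ) (hn : 1 ≤ n) (i j : ℕ) (hj : j < i) (hi : i ≤ n - 1)
    (v w : V) :
    (0 < ((i : ℝ) - (j : ℝ) - 1 / 2) * Real.exp (3 * j) *
        (s v w + 1 / (4 * n * Real.exp (3 * n)))) ∧
    (s v w = 0 →
      ((i : ℝ) - (j : ℝ) - 1 / 2) * Real.exp (3 * j) *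
        (s v w + 1 / (4 * n * Real.exp (3 * n))) < 1 / 3) ∧
    (s v w = 1 →
      1 / 2 < ((i : ℝ) - (j : ℝ) - 1 / 2) * Real.exp (3 * j) *
        (s v w + 1 / (4 * n * Real.exp (3 * n)))) :=
  modified_attention_values_general s hs n i j hj hi v w
end

section
/- Let s : V × V → {0,1} and define s̄((v,i,n),(w,j,n)) = (i - j - 1/2)·e^{3j}·(s(v,w) + 1/(4n·e^{3n})). Fix v, i, n with i ≤ n-1. If j < j' < i and s(v,w) = s(v,w'), then s̄((v,i,n),(w,j,n)) < s̄((v,i,n),(w',j',n)). -/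
open Real Set

/-- The gain `exp (k (y - x)) > 1 + k (y - x)` beats the loss `y - x` in the linear factor
as long as `k (c - y) ≥ 1`. -/
theorem strictMonoOn_sub_mul_exp {k : ℝ} (hk : 0 < k) (c : ℝ) :
    StrictMonoOn (fun x => (c - x) * exp (k * x)) (Iic (c - k⁻¹)) := by
  intro x _ y hy hxy
  have hky : 1 ≤ k * (c - y) := by
    rw [mem_Iic] at hy
    nlinarith [mul_inv_cancel₀ hk.ne']
  have hgain : 1 + k * (y - x) < exp (k * (y - x)) := by
    have := add_one_lt_exp (x := k * (y - x)) (by positivity)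
    linarith
  have hexp : exp (k * y) = exp (k * x) * exp (k * (y - x)) := by
    rw [← exp_add]; ring_nf
  have key : c - x < (c - y) * exp (k * (y - x)) := by
    nlinarith [mul_lt_mul_of_pos_left hgain (by nlinarith : 0 < c - y)]
  calc (c - x) * exp (k * x) < (c - y) * exp (k * (y - x)) * exp (k * x) :=
        mul_lt_mul_of_pos_right key (exp_pos _)
    _ = (c - y) * exp (k * y) := by rw [hexp]; ring

theorem modified_attention_strict_mono_general {V : Type*} (s : V → V → ℝ)
    (hs : ∀ v w, s v w = 0 ∨ s v w = 1)
    (n : ℕ) (hn : 1 ≤ n) (i j j' : ℕ)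
    (hjj' : j < j') (hj'i : j' < i)
    (v w w' : V) (hvw : s v w = s v w') :
    ((i : ℝ) - (j : ℝ) - 1 / 2) * Real.exp (3 * j) *
      (s v w + 1 / (4 * n * Real.exp (3 * n))) <
    ((i : ℝ) - (j' : ℝ) - 1 / 2) * Real.exp (3 * j') *
      (s v w' + 1 / (4 * n * Real.exp (3 * n))) := by
  rw [hvw]
  have hs_nonneg : 0 ≤ s v w' := by rcases hs v w' with h | h <;> simp [h]
  have hn_pos : (0 : ℝ) < n := by exact_mod_cast hn
  have hweight : 0 < s v w' + 1 / (4 * n * exp (3 * n)) :=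
    add_pos_of_nonneg_of_pos hs_nonneg (one_div_pos.2 (by positivity))
  refine mul_lt_mul_of_pos_right ?_ hweight
  have hjj' : (j : ℝ) < j' := by exact_mod_cast hjj'
  have hj'i : (j' : ℝ) + 1 ≤ i := by exact_mod_cast hj'i
  have hmono := strictMonoOn_sub_mul_exp (k := 3) (by norm_num) ((i : ℝ) - 1 / 2)
    (a := j) (b := j') (by rw [mem_Iic]; linarith) (by rw [mem_Iic]; linarith) hjj'
  convert hmono using 2 <;> ring

/-- Monotonicity of the modified attention function: for `j < j' < i ≤ n-1`
and equal original scores `s(v,w) = s(v,w')`, the modified score at `j'` is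
strictly larger than at `j`. -/
theorem modified_attention_strict_mono {V : Type*} (s : V → V → ℝ)
    (hs : ∀ v w, s v w = 0 ∨ s v w = 1)
    (n : ℕ) (hn : 1 ≤ n) (i j j' : ℕ) (hi : i ≤ n - 1)
    (hjn : j < n) (hj'n : j' < n)
    (hjj' : j < j') (hj'i : j' < i)
    (v w w' : V) (hvw : s v w = s v w') :
    ((i : ℝ) - (j : ℝ) - 1 / 2) * Real.exp (3 * j) *
      (s v w + 1 / (4 * n * Real.exp (3 * n))) <
    ((i : ℝ) - (j' : ℝ) - 1 / 2) * Real.exp (3 * j') *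
      (s v w' + 1 / (4 * n * Real.exp (3 * n))) :=
  modified_attention_strict_mono_general s hs n hn i j j' hjj' hj'i v w w' hvw
end
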